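/- Martingale-theoretic direct product theorem (Theorem 7, abstract form). Let I₁,…,I_r be nonempty finite sets, p_i a probability distribution on I_i for each i, and equip Ω = I₁ × ⋯ × I_r with the product measure. Let t > 0, s > 0, 0 < ε ≤ t, and let m be a positive integer. For each j ∈ Fin m and each 1 ≤ i ≤ r, let C_{j,i} : I₁ × ⋯ × I_i → ℝ be nonnegative (so the random variable C_{j,i}(σ₁,…,σ_i) depends only on the first i coordinates), and suppose that for every history w ∈ I₁ × ⋯ × I_{i−1}: Σ_{x ∈ I_i} p_i(x)·C_{j,i}(w,x) ≥ t and Σ_{x ∈ I_i} p_i(x)·(C_{j,i}(w,x) − t)² ≤ s². Then, writing γ = s²/t² and α = ε/t, P_{σ}[ ∃ j ∈ Fin m : Σ_{i=1}^r C_{j,i}(σ₁,…,σ_i) ≤ (t − ε)·r ] ≤ m · 2^{ − K_{γ/(1+γ)}( (α+γ)/(1+γ) ) · r }. (With m = 2^b this is the bound for an algorithm reading b bits of advice.) -/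

import Mathlib

open Classical

/-- The binary-divergence-type function `K_y(x) = x log₂(x/y) + (1-x) log₂((1-x)/(1-y))`. -/
noncomputable def Kfun (y x : ℝ) : ℝ :=
  x * Real.logb 2 (x / y) + (1 - x) * Real.logb 2 ((1 - x) / (1 - y))

open Real Set Function Filter Topology

/-!
Chernoff's method along the filtration. Given the history, the increment `X = C j i` is
nonnegative with mean at least `t` and second moment about `t` at most `s²`. The parabola through
`(0, 1)` tangent to `x ↦ exp (-c x)` at `M = t + s²/t` dominates that exponential on `[0, ∞)`, so
`E[exp (-c X) | history] ≤ y + (1 - y) exp (-c M)` with `y = s² / (s² + t²)`: the value for the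
two-point law on `{0, M}`. Multiplying these conditional bounds over `i` and applying Markov's
inequality to `exp (-c ∑ i, X i)` gives, with `u = c M` and `1 - x = t (t - ε) / (s² + t²)`, the
bound `(exp (u (1 - x)) (y + (1 - y) exp (-u))) ^ r`, and the best `u` turns it into
`2 ^ (-K_y(x) r)` (for `x = 1` let `u → ∞`). A union bound over `j` gives the factor `m`.
-/

theorem nonneg_of_hasDerivAt_of_convexOn {φ ψ : ℝ → ℝ} {u : ℝ} (hu : 0 < u)
    (hφ : ∀ z, HasDerivAt φ (ψ z) z) (hψ : ConvexOn ℝ (Ici 0) ψ)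
    (hφ0 : φ 0 = 0) (hφu : φ u = 0) (hψu : ψ u = 0) {v : ℝ} (hv : 0 ≤ v) : 0 ≤ φ v := by
  -- Rolle gives a zero `w ∈ (0, u)` of `ψ`; by convexity `ψ ≥ 0` on `[0, w]` and on `[u, ∞)` and
  -- `ψ ≤ 0` on `[w, u]`, so `φ` rises from `φ 0 = 0`, falls to `φ u = 0`, then rises again.
  have hcont : Continuous φ := continuous_iff_continuousAt.2 fun z => (hφ z).continuousAt
  obtain ⟨w, ⟨hw0, hwu⟩, hψw⟩ :=
    exists_hasDerivAt_eq_zero hu hcont.continuousOn (hφ0.trans hφu.symm) fun z _ => hφ z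
  have hw : w ∈ Ici (0 : ℝ) := hw0.le
  have hu' : u ∈ Ici (0 : ℝ) := hu.le
  have mono {a b : ℝ} (hab : ∀ z ∈ Ioo a b, 0 ≤ ψ z) : MonotoneOn φ (Icc a b) :=
    monotoneOn_of_hasDerivWithinAt_nonneg (convex_Icc a b) hcont.continuousOn
      (fun z _ => (hφ z).hasDerivWithinAt) (by simpa using hab)
  rcases le_or_gt v w with hvw | hwv
  · refine hφ0 ▸ mono (a := 0) (b := w) (fun z hz => ?_) ⟨le_rfl, hw⟩ ⟨hv, hvw⟩ hv
    exact hψw ▸ hψ.le_left_of_right_le'' hz.1.le hu' hz.2.le hwu (hψu.trans hψw.symm).le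
  rcases le_or_gt v u with hvu | huv
  · have anti : AntitoneOn φ (Icc w u) :=
      antitoneOn_of_hasDerivWithinAt_nonpos (convex_Icc w u) hcont.continuousOn
        (fun z _ => (hφ z).hasDerivWithinAt) fun z hz => by
          rw [interior_Icc] at hz
          simpa [hψw, hψu] using
            hψ.le_on_segment hw hu' (segment_eq_Icc hwu.le ▸ Ioo_subset_Icc_self hz)
    exact hφu ▸ anti ⟨hwv.le, hvu⟩ ⟨hwu.le, le_rfl⟩ hvu
  · refine hφu ▸ mono (a := u) (b := v) (fun z hz => ?_) ⟨le_rfl, huv.le⟩ ⟨huv.le, le_rfl⟩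
      huv.le
    exact hψu ▸ hψ.le_right_of_left_le'' hw (hu'.trans hz.1.le) hwu hz.1.le
      (hψw.trans hψu.symm).le

theorem convexOn_affine_add_exp_neg (a b : ℝ) :
    ConvexOn ℝ univ fun z => a + b * z + exp (-z) := by
  refine ⟨convex_univ, fun x _ y _ α β hα hβ hab => ?_⟩
  have := convexOn_exp.2 (mem_univ (-x)) (mem_univ (-y)) hα hβ hab
  simp only [smul_eq_mul] at this ⊢
  rw [show α * -x + β * -y = -(α * x + β * y) by ring] at this
  linear_combination this - a * hab

/-- The right-hand side is the parabola through `(0, 1)` tangent to `exp (-·)` at `u`. -/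
theorem exp_neg_le_tangent_parabola {u v : ℝ} (hu : 0 < u) (hv : 0 ≤ v) :
    exp (-v) ≤
      exp (-u) * (1 - (v - u)) + (1 - exp (-u) - u * exp (-u)) / u ^ 2 * (v - u) ^ 2 := by
  set W := (1 - exp (-u) - u * exp (-u)) / u ^ 2 with hW
  have hφ : ∀ z, HasDerivAt (fun z => exp (-u) * (1 - (z - u)) + W * (z - u) ^ 2 - exp (-z))
      ((-exp (-u) - 2 * W * u) + 2 * W * z + exp (-z)) z := by
    intro z
    have := ((((hasDerivAt_id' z).sub_const u).const_sub 1).const_mul (exp (-u))).add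
      ((((hasDerivAt_id' z).sub_const u).pow 2).const_mul W) |>.sub (hasDerivAt_neg z).exp
    exact this.congr_deriv (by ring)
  have := nonneg_of_hasDerivAt_of_convexOn hu hφ
    ((convexOn_affine_add_exp_neg _ _).subset (subset_univ _) (convex_Ici 0)) ?_ (by simp)
    (by ring) hv
  · linarith
  · simp only [neg_zero, exp_zero, hW]
    field_simp
    ring

theorem sum_mul_quadratic {ι : Type*} [Fintype ι] {p : ι → ℝ} (hp1 : ∑ x, p x = 1)
    (g : ι → ℝ) (a b w : ℝ) :
    ∑ x, p x * (a + b * g x + w * g x ^ 2) =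
      a + b * ∑ x, p x * g x + w * ∑ x, p x * g x ^ 2 := by
  have : ∀ x, p x * (a + b * g x + w * g x ^ 2) =
      p x * a + b * (p x * g x) + w * (p x * g x ^ 2) := fun x => by ring
  simp only [this, Finset.sum_add_distrib, ← Finset.sum_mul, ← Finset.mul_sum, hp1, one_mul]

theorem sum_mul_exp_neg_le {ι : Type*} [Fintype ι] {p f : ι → ℝ} (hp0 : ∀ x, 0 ≤ p x)
    (hp1 : ∑ x, p x = 1) (hf0 : ∀ x, 0 ≤ f x) {t γ c : ℝ} (ht : 0 < t) (hγ : 0 ≤ γ)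
    (hc : 0 < c) (hmean : t ≤ ∑ x, p x * f x)
    (hvar : ∑ x, p x * (f x - t) ^ 2 ≤ γ * t ^ 2) :
    ∑ x, p x * exp (-(c * f x)) ≤ (γ + exp (-(c * (t * (1 + γ))))) / (1 + γ) := by
  set M := t * (1 + γ) with hM
  set E := exp (-(c * M))
  set w := (1 - E - c * M * E) / M ^ 2 with hw
  have hM0 : 0 < M := by positivity
  have hw0 : 0 ≤ w := by
    have := mul_le_mul_of_nonneg_right (add_one_le_exp (c * M)) (exp_pos (-(c * M))).le
    rw [← exp_add, add_neg_cancel, exp_zero] at this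
    exact div_nonneg (by linarith) (by positivity)
  -- the parabola rewritten around the mean `t` instead of the tangency point `M`
  have hpoint : ∀ x, exp (-(c * f x)) ≤ E * (1 + c * (M - t)) + w * (M - t) ^ 2
      + -(c * E + 2 * w * (M - t)) * (f x - t) + w * (f x - t) ^ 2 := by
    intro x
    have := exp_neg_le_tangent_parabola (mul_pos hc hM0) (mul_nonneg hc.le (hf0 x))
    convert this using 1
    rw [hw]
    field_simp
    ring
  have hcentered : ∑ x, p x * (f x - t) = ∑ x, p x * f x - t := by
    simp only [mul_sub, Finset.sum_sub_distrib, ← Finset.sum_mul, hp1, one_mul]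
  calc ∑ x, p x * exp (-(c * f x))
      ≤ ∑ x, p x * (E * (1 + c * (M - t)) + w * (M - t) ^ 2
          + -(c * E + 2 * w * (M - t)) * (f x - t) + w * (f x - t) ^ 2) :=
        Finset.sum_le_sum fun x _ => mul_le_mul_of_nonneg_left (hpoint x) (hp0 x)
    _ = E * (1 + c * (M - t)) + w * (M - t) ^ 2
          - (c * E + 2 * w * (M - t)) * (∑ x, p x * f x - t) + w * ∑ x, p x * (f x - t) ^ 2 := by
        rw [sum_mul_quadratic hp1, hcentered]
        ring
    _ ≤ E * (1 + c * (M - t)) + w * (M - t) ^ 2 + w * (γ * t ^ 2) := by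
        have : 0 ≤ (c * E + 2 * w * (M - t)) * (∑ x, p x * f x - t) := by
          apply mul_nonneg _ (by linarith)
          have : 0 ≤ M - t := by rw [hM]; nlinarith
          positivity
        nlinarith [mul_le_mul_of_nonneg_left hvar hw0]
    _ = (γ + E) / (1 + γ) := by
        rw [hw, hM]
        field_simp
        ring

section Product

variable {ι : Type*} [Fintype ι] [DecidableEq ι] {I : ι → Type*}

theorem prod_update_mul_eq (p : ∀ i, I i → ℝ) (σ : ∀ k, I k) (i : ι) (x : I i) :
    (∏ k, p k (update σ i x k)) * p i (σ i) = (∏ k, p k (σ k)) * p i x := by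
  simp only [apply_update (fun k => p k), Finset.prod_update_of_mem (Finset.mem_univ i),
    ← Finset.mul_prod_erase Finset.univ (fun k => p k (σ k)) (Finset.mem_univ i),
    Finset.sdiff_singleton_eq_erase]
  ring

theorem sum_prod_mul_sum_update [∀ i, Fintype (I i)] (p : ∀ i, I i → ℝ)
    (hp1 : ∀ i, ∑ x, p i x = 1) (i : ι) (F : (∀ k, I k) → ℝ) :
    ∑ σ, (∏ k, p k (σ k)) * ∑ x, p i x * F (update σ i x) = ∑ σ, (∏ k, p k (σ k)) * F σ := by
  -- swapping `x` with the `i`-th coordinate of `σ` is an involution preserving the weights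
  let e : Equiv.Perm ((∀ k, I k) × I i) :=
    Involutive.toPerm (fun σx => (update σx.1 i σx.2, σx.1 i)) fun σx => by simp
  calc ∑ σ, (∏ k, p k (σ k)) * ∑ x, p i x * F (update σ i x)
      = ∑ σx : (∀ k, I k) × I i, (∏ k, p k (update σx.1 i σx.2 k)) * p i (σx.1 i)
          * F (update σx.1 i σx.2) := by
        simp only [Fintype.sum_prod_type, Finset.mul_sum, prod_update_mul_eq, mul_assoc]
    _ = ∑ σx : (∀ k, I k) × I i, (∏ k, p k (σx.1 k)) * p i σx.2 * F σx.1 :=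
        Equiv.sum_comp e (fun σx => (∏ k, p k (σx.1 k)) * p i σx.2 * F σx.1)
    _ = ∑ σ, (∏ k, p k (σ k)) * F σ := by
        simp only [Fintype.sum_prod_type, mul_right_comm _ (p i _),
          ← Finset.mul_sum, hp1, mul_one]

end Product

theorem sum_prod_mul_prod_le_pow {r : ℕ} {I : Fin r → Type*} [∀ i, Fintype (I i)]
    {p : ∀ i, I i → ℝ} (hp0 : ∀ i x, 0 ≤ p i x) (hp1 : ∀ i, ∑ x, p i x = 1)
    {G : Fin r → (∀ k, I k) → ℝ} (hG0 : ∀ i σ, 0 ≤ G i σ)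
    (hGdep : ∀ i (σ σ' : ∀ k, I k), (∀ k, k ≤ i → σ k = σ' k) → G i σ = G i σ')
    {q : ℝ} (hq : 0 ≤ q) (hGstep : ∀ i σ, ∑ x, p i x * G i (update σ i x) ≤ q) :
    ∑ σ, (∏ k, p k (σ k)) * ∏ i, G i σ ≤ q ^ r := by
  suffices h : ∀ n ≤ r, ∑ σ, (∏ k, p k (σ k)) *
      ∏ i ∈ Finset.univ.filter (fun i : Fin r => (i : ℕ) < n), G i σ ≤ q ^ n by
    simpa using h r le_rfl
  intro n
  induction n with
  | zero =>
    intro _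
    simp [← Fintype.prod_sum, hp1]
  | succ n ih =>
    intro hn
    set i₀ : Fin r := ⟨n, hn⟩
    set H := fun σ : ∀ k, I k => ∏ i ∈ Finset.univ.filter (fun i : Fin r => (i : ℕ) < n), G i σ
    have hsplit : ∀ σ, ∏ i ∈ Finset.univ.filter (fun i : Fin r => (i : ℕ) < n + 1), G i σ =
        G i₀ σ * H σ := by
      intro σ
      rw [← Finset.mul_prod_erase _ _ (by simp [i₀] : i₀ ∈ _)]
      congr 2
      ext i
      simp [i₀, Fin.ext_iff]
      omega
    have hH : ∀ σ x, H (update σ i₀ x) = H σ := fun σ x =>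
      Finset.prod_congr rfl fun i hi => hGdep i _ _ fun k hk =>
        update_of_ne (Fin.lt_def.2
          ((Fin.le_iff_val_le_val.1 hk).trans_lt (Finset.mem_filter.1 hi).2)).ne _ _
    calc ∑ σ, (∏ k, p k (σ k)) *
          ∏ i ∈ Finset.univ.filter (fun i : Fin r => (i : ℕ) < n + 1), G i σ
        = ∑ σ, (∏ k, p k (σ k)) * ((∑ x, p i₀ x * G i₀ (update σ i₀ x)) * H σ) := by
          simp only [hsplit, ← sum_prod_mul_sum_update p hp1 i₀ (fun σ => G i₀ σ * H σ), hH,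
            Finset.sum_mul, mul_assoc]
      _ ≤ ∑ σ, (∏ k, p k (σ k)) * (q * H σ) := by
          gcongr with σ
          · exact Finset.prod_nonneg fun k _ => hp0 k _
          · exact Finset.prod_nonneg fun i _ => hG0 i σ
          · exact hGstep i₀ σ
      _ ≤ q ^ (n + 1) := by
          rw [pow_succ']
          simp only [mul_left_comm _ q, ← Finset.mul_sum]
          exact mul_le_mul_of_nonneg_left (ih (by omega)) hq

theorem rpow_neg_Kfun_one {y : ℝ} (hy : 0 < y) : (2 : ℝ) ^ (-Kfun y 1) = y := by
  simp [Kfun, logb_inv, rpow_logb two_pos one_lt_two.ne' hy]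

theorem rpow_neg_Kfun {y x : ℝ} (hy0 : 0 < y) (hy1 : y < 1) (hx0 : 0 < x) (hx1 : x < 1) :
    (2 : ℝ) ^ (-Kfun y x) = (y / x) ^ x * ((1 - y) / (1 - x)) ^ (1 - x) := by
  have h1y : 0 < 1 - y := by linarith
  have h1x : 0 < 1 - x := by linarith
  have hlog2 : log 2 ≠ 0 := (log_pos one_lt_two).ne'
  rw [rpow_def_of_pos two_pos, rpow_def_of_pos (by positivity), rpow_def_of_pos (by positivity),
    ← exp_add, Kfun, logb, logb, ← inv_div x y, ← inv_div (1 - x) (1 - y), log_inv, log_inv]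
  congr 1
  field_simp
  ring

/-- The optimal Chernoff bound for a Bernoulli variable of mean `1 - y` to fall to `1 - x`. -/
theorem exists_exp_mul_eq_rpow_neg_Kfun {y x : ℝ} (hy : 0 < y) (hyx : y < x) (hx : x < 1) :
    ∃ u > 0, exp (u * (1 - x)) * (y + (1 - y) * exp (-u)) = (2 : ℝ) ^ (-Kfun y x) := by
  have hx0 : 0 < x := hy.trans hyx
  have h1y : 0 < 1 - y := by linarith
  have h1x : 0 < 1 - x := by linarith
  rw [rpow_neg_Kfun hy (by linarith) hx0 hx]
  set a := y / x
  set b := (1 - y) / (1 - x)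
  have ha : 0 < a := by positivity
  have hb : 0 < b := by positivity
  refine ⟨log (b / a), log_pos ?_, ?_⟩
  · rw [one_lt_div ha, div_lt_div_iff₀ hx0 h1x]
    nlinarith
  have hexp : exp (-log (b / a)) = a / b := by rw [exp_neg, exp_log (by positivity), inv_div]
  have hmix : y + (1 - y) * (a / b) = a := by simp only [a, b]; field_simp; ring
  have hsplit : a = a ^ x * a ^ (1 - x) := by rw [← rpow_add ha]; simp
  rw [← rpow_def_of_pos (by positivity), hexp, hmix, div_rpow hb.le ha.le]
  nth_rw 2 [hsplit]
  field_simp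

theorem le_rpow_neg_Kfun_pow {y x P : ℝ} (r : ℕ) (hy : 0 < y) (hyx : y < x) (hx : x ≤ 1)
    (h : ∀ u > 0, P ≤ (exp (u * (1 - x)) * (y + (1 - y) * exp (-u))) ^ r) :
    P ≤ ((2 : ℝ) ^ (-Kfun y x)) ^ r := by
  rcases hx.lt_or_eq with hx | rfl
  · obtain ⟨u, hu, hKu⟩ := exists_exp_mul_eq_rpow_neg_Kfun hy hyx hx
    exact hKu ▸ h u hu
  · have hlim : Tendsto (fun u => (exp (u * (1 - 1)) * (y + (1 - y) * exp (-u))) ^ r) atTop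
        (𝓝 (y ^ r)) := by
      simpa using ((tendsto_exp_neg_atTop_nhds_zero.const_mul (1 - y)).const_add y).pow r
    rw [rpow_neg_Kfun_one hy]
    exact ge_of_tendsto hlim ((eventually_gt_atTop 0).mono h)

theorem sum_ite_le_le_exp_mul_sum {α : Type*} [Fintype α] {P : α → ℝ} (hP : ∀ σ, 0 ≤ P σ)
    (S : α → ℝ) {a c : ℝ} (hc : 0 ≤ c) :
    (∑ σ, if S σ ≤ a then P σ else 0) ≤ exp (c * a) * ∑ σ, P σ * exp (-(c * S σ)) := by
  rw [Finset.mul_sum]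
  gcongr with σ
  split_ifs with h
  · have : 1 ≤ exp (c * a) * exp (-(c * S σ)) := by
      rw [← exp_add]
      exact one_le_exp (by nlinarith)
    nlinarith [hP σ]
  · have := hP σ
    positivity

theorem sum_ite_exists_le_sum_sum {α β : Type*} [Fintype α] [Fintype β] {P : α → ℝ}
    (hP : ∀ σ, 0 ≤ P σ) (A : β → α → Prop) [∀ j, DecidablePred (A j)]
    [DecidablePred fun σ => ∃ j, A j σ] :
    (∑ σ, if ∃ j, A j σ then P σ else 0) ≤ ∑ j, ∑ σ, if A j σ then P σ else 0 := by
  have hnonneg : ∀ j σ, 0 ≤ if A j σ then P σ else 0 := fun j σ => by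
    split_ifs
    exacts [hP σ, le_rfl]
  rw [Finset.sum_comm]
  gcongr with σ
  split_ifs with h
  · obtain ⟨j, hj⟩ := h
    exact (if_pos hj).symm.le.trans
      (Finset.single_le_sum (fun j _ => hnonneg j σ) (Finset.mem_univ j))
  · exact Finset.sum_nonneg fun j _ => hnonneg j σ

section Adapted

variable {r : ℕ} {I : Fin r → Type*} [∀ i, Fintype (I i)] {p : ∀ i, I i → ℝ}
  {C : Fin r → (∀ k, I k) → ℝ}

theorem sum_ite_sum_le_le_exp_mul_pow (hp0 : ∀ i x, 0 ≤ p i x) (hp1 : ∀ i, ∑ x, p i x = 1)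
    (hC0 : ∀ i σ, 0 ≤ C i σ)
    (hCdep : ∀ i (σ σ' : ∀ k, I k), (∀ k, k ≤ i → σ k = σ' k) → C i σ = C i σ')
    {t γ c : ℝ} (ht : 0 < t) (hγ : 0 ≤ γ) (hc : 0 < c)
    (hCmean : ∀ i σ, t ≤ ∑ x, p i x * C i (update σ i x))
    (hCvar : ∀ i σ, ∑ x, p i x * (C i (update σ i x) - t) ^ 2 ≤ γ * t ^ 2) (a : ℝ) :
    (∑ σ, if ∑ i, C i σ ≤ a then ∏ k, p k (σ k) else 0) ≤
      exp (c * a) * ((γ + exp (-(c * (t * (1 + γ))))) / (1 + γ)) ^ r := by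
  refine (sum_ite_le_le_exp_mul_sum (fun σ => Finset.prod_nonneg fun k _ => hp0 k _) _
    hc.le).trans ?_
  gcongr
  simp only [Finset.mul_sum, ← Finset.sum_neg_distrib, exp_sum]
  exact sum_prod_mul_prod_le_pow hp0 hp1 (fun _ _ => (exp_pos _).le)
    (fun i σ σ' h => by rw [hCdep i σ σ' h]) (by positivity)
    fun i σ => sum_mul_exp_neg_le (hp0 i) (hp1 i) (fun _ => hC0 i _) ht hγ hc (hCmean i σ)
      (hCvar i σ)

theorem sum_ite_sum_le_le_rpow_neg_Kfun_pow (hp0 : ∀ i x, 0 ≤ p i x)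
    (hp1 : ∀ i, ∑ x, p i x = 1) (hC0 : ∀ i σ, 0 ≤ C i σ)
    (hCdep : ∀ i (σ σ' : ∀ k, I k), (∀ k, k ≤ i → σ k = σ' k) → C i σ = C i σ')
    {t s ε : ℝ} (ht : 0 < t) (hs : 0 < s) (hε0 : 0 < ε) (hεt : ε ≤ t)
    (hCmean : ∀ i σ, t ≤ ∑ x, p i x * C i (update σ i x))
    (hCvar : ∀ i σ, ∑ x, p i x * (C i (update σ i x) - t) ^ 2 ≤ s ^ 2) :
    (∑ σ, if ∑ i, C i σ ≤ (t - ε) * r then ∏ k, p k (σ k) else 0) ≤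
      ((2 : ℝ) ^ (-Kfun ((s ^ 2 / t ^ 2) / (1 + s ^ 2 / t ^ 2))
        ((ε / t + s ^ 2 / t ^ 2) / (1 + s ^ 2 / t ^ 2)))) ^ r := by
  set γ := s ^ 2 / t ^ 2
  have hγ : 0 < γ := by positivity
  have hα : ε / t ≤ 1 := (div_le_one ht).2 hεt
  refine le_rpow_neg_Kfun_pow r (by positivity)
    (by gcongr; exact lt_add_of_pos_left _ (div_pos hε0 ht))
    ((div_le_one (by positivity)).2 (by linarith)) fun u hu => ?_
  have hM : 0 < t * (1 + γ) := by positivity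
  refine (sum_ite_sum_le_le_exp_mul_pow hp0 hp1 hC0 hCdep ht hγ.le (div_pos hu hM) hCmean
    (fun i σ => (hCvar i σ).trans_eq (div_mul_cancel₀ _ (by positivity)).symm) _).trans_eq ?_
  rw [div_mul_cancel₀ _ hM.ne', mul_pow, ← exp_nat_mul]
  congr 2 <;> (field_simp; ring)

end Adapted

theorem direct_product_martingale_general
    {r : ℕ}
    {I : Fin r → Type*} [∀ i, Fintype (I i)]
    (p : ∀ i, I i → ℝ) (hp0 : ∀ i x, 0 ≤ p i x) (hp1 : ∀ i, ∑ x, p i x = 1)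
    (t s ε : ℝ) (ht : 0 < t) (hs : 0 < s) (hε0 : 0 < ε) (hεt : ε ≤ t)
    {m : ℕ}
    (C : Fin m → ∀ i : Fin r, (∀ k, I k) → ℝ)
    (hC0 : ∀ j i σ, 0 ≤ C j i σ)
    (hCdep : ∀ j i (σ σ' : ∀ k, I k), (∀ k : Fin r, k ≤ i → σ k = σ' k) → C j i σ = C j i σ')
    (hCmean : ∀ j i (σ : ∀ k, I k), ∑ x : I i, p i x * C j i (Function.update σ i x) ≥ t)
    (hCvar : ∀ j i (σ : ∀ k, I k),
      ∑ x : I i, p i x * (C j i (Function.update σ i x) - t) ^ 2 ≤ s ^ 2) :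
    (∑ σ : ∀ k, I k,
        if ∃ j : Fin m, (∑ i, C j i σ) ≤ (t - ε) * r then ∏ k, p k (σ k) else 0)
      ≤ (m : ℝ) * (2 : ℝ) ^
          (-(Kfun ((s ^ 2 / t ^ 2) / (1 + s ^ 2 / t ^ 2))
              ((ε / t + s ^ 2 / t ^ 2) / (1 + s ^ 2 / t ^ 2)) * (r : ℝ))) := by
  rw [← neg_mul, rpow_mul two_pos.le, rpow_natCast]
  calc _ ≤ _ := sum_ite_exists_le_sum_sum (fun σ => Finset.prod_nonneg fun k _ => hp0 k _) _
    _ ≤ ∑ _j : Fin m, _ := Finset.sum_le_sum fun j _ =>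
        sum_ite_sum_le_le_rpow_neg_Kfun_pow hp0 hp1 (hC0 j) (hCdep j) ht hs hε0 hεt
          (hCmean j) (hCvar j)
    _ = _ := by simp

/-- Martingale-theoretic direct product theorem (Theorem 7, abstract form). -/
theorem direct_product_martingale
    {r : ℕ} (hr : 1 ≤ r)
    {I : Fin r → Type*} [∀ i, Fintype (I i)] [∀ i, Nonempty (I i)]
    (p : ∀ i, I i → ℝ) (hp0 : ∀ i x, 0 ≤ p i x) (hp1 : ∀ i, ∑ x, p i x = 1)
    (t s ε : ℝ) (ht : 0 < t) (hs : 0 < s) (hε0 : 0 < ε) (hεt : ε ≤ t)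
    {m : ℕ} (hm : 1 ≤ m)
    (C : Fin m → ∀ i : Fin r, (∀ k, I k) → ℝ)
    (hC0 : ∀ j i σ, 0 ≤ C j i σ)
    (hCdep : ∀ j i (σ σ' : ∀ k, I k), (∀ k : Fin r, k ≤ i → σ k = σ' k) → C j i σ = C j i σ')
    (hCmean : ∀ j i (σ : ∀ k, I k), ∑ x : I i, p i x * C j i (Function.update σ i x) ≥ t)
    (hCvar : ∀ j i (σ : ∀ k, I k),
      ∑ x : I i, p i x * (C j i (Function.update σ i x) - t) ^ 2 ≤ s ^ 2) :
    (∑ σ : ∀ k, I k,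
        if ∃ j : Fin m, (∑ i, C j i σ) ≤ (t - ε) * r then ∏ k, p k (σ k) else 0)
      ≤ (m : ℝ) * (2 : ℝ) ^
          (-(Kfun ((s ^ 2 / t ^ 2) / (1 + s ^ 2 / t ^ 2))
              ((ε / t + s ^ 2 / t ^ 2) / (1 + s ^ 2 / t ^ 2)) * (r : ℝ))) :=
  direct_product_martingale_general p hp0 hp1 t s ε ht hs hε0 hεt C hC0 hCdep hCmean hCvar
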